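/- Let ω = exp(2π√−1/3). For all complex numbers c1, c2, β0, β3, the product over all i1, i2, i3 ∈ {0, 1, 2} of (β0^4 + ω^{i1}·(c1·β0)^4 + ω^{i2}·(c2·β0)^4 + ω^{i3}·β3^4) equals the product over all i1, i2 ∈ {0, 1, 2} of ((1 + ω^{i1}·c1^4 + ω^{i2}·c2^4)^3·(β0^3)^4 + (β3^3)^4). -/

import Mathlib

noncomputable def ω : ℂ := Complex.exp (2 * Real.pi * Complex.I / 3)

open Finset

theorem IsPrimitiveRoot.prod_range_add_pow_mul {R : Type*} [CommRing R] [IsDomain R] {ζ : R}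
    {n : ℕ} (hodd : Odd n) (h : IsPrimitiveRoot ζ n) (x y : R) :
    ∏ i ∈ range n, (x + ζ ^ i * y) = x ^ n + y ^ n := by
  rw [h.pow_add_pow_eq_prod_add_mul x y hodd]
  refine prod_nbij (ζ ^ ·) (fun i hi ↦ ?_) h.injOn_pow (fun ξ hξ ↦ ?_) fun _ _ ↦ rfl
  · rw [Polynomial.mem_nthRootsFinset hodd.pos, ← pow_mul, mul_comm, pow_mul, h.pow_eq_one,
      one_pow]
  · rw [mem_coe, Polynomial.mem_nthRootsFinset hodd.pos] at hξ
    have : NeZero n := ⟨hodd.pos.ne'⟩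
    obtain ⟨i, hi, rfl⟩ := h.eq_pow_of_pow_eq_one hξ
    exact ⟨i, mem_range.mpr hi, rfl⟩

theorem isPrimitiveRoot_ω : IsPrimitiveRoot ω 3 := by
  simpa [ω] using Complex.isPrimitiveRoot_exp 3 (by norm_num)

theorem line_cut_defining_equation (c1 c2 β0 β3 : ℂ) :
    (∏ i1 : Fin 3, ∏ i2 : Fin 3, ∏ i3 : Fin 3,
        (β0 ^ 4 + ω ^ (i1 : ℕ) * (c1 * β0) ^ 4 + ω ^ (i2 : ℕ) * (c2 * β0) ^ 4 +
          ω ^ (i3 : ℕ) * β3 ^ 4)) =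
      ∏ i1 : Fin 3, ∏ i2 : Fin 3,
        ((1 + ω ^ (i1 : ℕ) * c1 ^ 4 + ω ^ (i2 : ℕ) * c2 ^ 4) ^ 3 * (β0 ^ 3) ^ 4 +
          (β3 ^ 3) ^ 4) := by
  refine prod_congr rfl fun i1 _ ↦ prod_congr rfl fun i2 _ ↦ ?_
  rw [Fin.prod_univ_eq_prod_range (fun i ↦ _ + ω ^ i * β3 ^ 4),
    isPrimitiveRoot_ω.prod_range_add_pow_mul (by decide)]
  ring
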